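/- arXiv:2501.17488 — 5 statements merged into one kernel-verified Lean document; each statement's English description precedes it below -/
import Mathlib

section
/- Let f : E → ℝ be convex and differentiable, fix z̄ ∈ E and γ > 0, let g(w) := f(w) + (γ/3)‖w − z̄‖³ with gradient ∇g, and let ẑ be a global minimizer of g. Then for every z ∈ E: ‖∇g(z)‖^{3/2} ≥ (3/2)·√(γ/2)·(g(z) − g(ẑ)); equivalently, g(z) − g(ẑ) ≤ (2/3)·√(2/γ)·‖∇g(z)‖^{3/2}. -/
open scoped RealInnerProductSpace


-- directional derivative along a line from a gradient
lemma grad_line_deriv {E : Type*} [NormedAddCommGroup E] [InnerProductSpace ℝ E] [CompleteSpace E]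
    {f : E → ℝ} {G x : E} (hx : HasGradientAt f G x) (h : E) :
    HasDerivAt (fun t : ℝ => f (x + t • h)) ⟪G, h⟫ 0 := by
  have hline : HasDerivAt (fun t : ℝ => x + t • h) h 0 := by
    simpa using ((hasDerivAt_id (0:ℝ)).smul_const h).const_add x
  have hx' : HasFDerivAt f ((InnerProductSpace.toDual ℝ E) G) (x + (0:ℝ) • h) := by
    simpa using hx.hasFDerivAt
  have := (hx'.comp 0 hline.hasFDerivAt).hasDerivAt
  convert this using 1
  · rfl
  · rfl
  · rfl
  · simp [ContinuousLinearMap.toSpanSingleton_apply, InnerProductSpace.toDual_apply_apply]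

-- first-order condition for convexity
lemma convex_first_order {E : Type*} [NormedAddCommGroup E] [InnerProductSpace ℝ E] [CompleteSpace E] [CompleteSpace E]
    (f : E → ℝ) (hconv : ConvexOn ℝ Set.univ f) {G x : E}
    (hx : HasGradientAt f G x) (y : E) : f x + ⟪G, y - x⟫ ≤ f y := by
  have hφ : HasDerivAt (fun t : ℝ => f (x + t • (y - x))) ⟪G, y - x⟫ 0 :=
    grad_line_deriv hx (y - x)
  have hslope : ∀ t : ℝ, t ∈ Set.Ioc (0:ℝ) 1 → (f (x + t • (y - x)) - f x) / t ≤ f y - f x := by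
    intro t ht
    have hcx : f (x + t • (y - x)) ≤ (1 - t) * f x + t * f y := by
      have := hconv.2 (Set.mem_univ x) (Set.mem_univ y) (by linarith [ht.2, ht.1] : (0:ℝ) ≤ 1 - t)
        (le_of_lt ht.1) (by ring : (1 - t) + t = 1)
      have heq : (1 - t) • x + t • y = x + t • (y - x) := by
        rw [smul_sub]; module
      simpa [heq, smul_eq_mul] using this
    rw [div_le_iff₀ ht.1]
    nlinarith [ht.1]
  have htend : Filter.Tendsto (fun t : ℝ => (f (x + t • (y - x)) - f x) / t)
      (nhdsWithin 0 (Set.Ioi 0)) (nhds ⟪G, y - x⟫) := by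
    have h1 := hφ.hasDerivWithinAt (s := Set.Ioi (0:ℝ))
    have := hasDerivWithinAt_iff_tendsto_slope.1 h1
    have h2 : Filter.Tendsto (slope (fun t : ℝ => f (x + t • (y - x))) 0)
        (nhdsWithin 0 (Set.Ioi 0)) (nhds ⟪G, y - x⟫) := by
      refine this.mono_left (nhdsWithin_mono _ ?_)
      intro t ht
      exact ⟨ht, by simp [(Set.mem_Ioi.mp ht).ne']⟩
    refine h2.congr (fun t => ?_)
    simp [slope_def_field]
  have : ⟪G, y - x⟫ ≤ f y - f x := by
    refine le_of_tendsto htend ?_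
    filter_upwards [Ioc_mem_nhdsGT_of_mem (by norm_num : (0:ℝ) ∈ Set.Ico (0:ℝ) 1)] with t ht
    exact hslope t ht
  linarith
lemma poly_key (a b d : ℝ) (ha : 0 ≤ a) (hb : 0 ≤ b) (hd : 0 ≤ d) (h : d ≤ a + b) :
    0 ≤ 2*b^3 + a^3 - 3*a*b^2 + 3*a*d^2 - d^3 := by
  rcases le_or_gt d (3*a) with hc | hc
  · nlinarith [mul_nonneg (sq_nonneg (a-b)) (by positivity : (0:ℝ) ≤ a+2*b),
      mul_nonneg (mul_nonneg hd hd) (by linarith : (0:ℝ) ≤ 3*a - d)]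
  · have hb2 : 2*a < b := by linarith
    have hR : (0:ℝ) ≤ d^2 + d*(b-2*a) + (a+b)*(b-2*a) := by
      have := mul_nonneg hd (by linarith : (0:ℝ) ≤ b - 2*a)
      nlinarith
    have he : (0:ℝ) ≤ a + b - d := by linarith
    nlinarith [mul_nonneg he hR, mul_nonneg hb (sq_nonneg (2*b-3*a)),
      mul_nonneg (mul_nonneg ha ha) ha, mul_nonneg (mul_nonneg ha ha) hb]

-- uniform-convexity-type lower bound for the cubic ‖·‖³/3
lemma cubic_lower {E : Type*} [NormedAddCommGroup E] [InnerProductSpace ℝ E] (u v : E) :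
    ‖u‖^3/3 + ‖u‖ * ⟪u, v - u⟫ + ‖v - u‖^3/6 ≤ ‖v‖^3/3 := by
  have hd2 : ‖v - u‖^2 = ‖v‖^2 - 2*⟪v,u⟫ + ‖u‖^2 := norm_sub_sq_real v u
  have hiu : ⟪u, v - u⟫ = ⟪v,u⟫ - ‖u‖^2 := by
    rw [inner_sub_right, real_inner_self_eq_norm_sq, real_inner_comm]
  have htri : ‖v - u‖ ≤ ‖v‖ + ‖u‖ := norm_sub_le v u
  have hkey := poly_key ‖u‖ ‖v‖ ‖v - u‖ (norm_nonneg u) (norm_nonneg v) (norm_nonneg _)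
    (by linarith)
  have h5 : ‖u‖ * ‖v - u‖^2 = ‖u‖ * (‖v‖^2 - 2*⟪v,u⟫ + ‖u‖^2) := by rw [hd2]
  rw [hiu]
  nlinarith [hkey, h5]

-- derivative of the cubic term along a line
lemma cubic_line_deriv {E : Type*} [NormedAddCommGroup E] [InnerProductSpace ℝ E]
    (γ : ℝ) (zbar z h : E) :
    HasDerivAt (fun t : ℝ => γ/3 * ‖z + t • h - zbar‖^3)
      (γ * ‖z - zbar‖ * ⟪z - zbar, h⟫) 0 := by
  set u := z - zbar with hu
  have hfun : ∀ t : ℝ, γ/3 * ‖z + t • h - zbar‖^3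
      = γ/3 * ((‖u‖^2 + 2*t*⟪u,h⟫ + t^2*‖h‖^2) ^ ((3:ℝ)/2)) := by
    intro t
    have h1 : z + t • h - zbar = u + t • h := by rw [hu]; abel
    have h2 : ‖u + t • h‖^2 = ‖u‖^2 + 2*t*⟪u,h⟫ + t^2*‖h‖^2 := by
      rw [norm_add_sq_real, real_inner_smul_right, norm_smul]
      simp [mul_pow]
      ring
    have h3 : (‖u + t • h‖^2 : ℝ) ^ ((3:ℝ)/2) = ‖u + t • h‖^3 := by
      rw [← Real.rpow_natCast (‖u + t • h‖) 2, ← Real.rpow_mul (norm_nonneg _),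
        ← Real.rpow_natCast (‖u + t • h‖) 3]
      norm_num
    rw [h1, ← h2, h3]
  have hq : HasDerivAt (fun t:ℝ => ‖u‖^2 + 2*t*⟪u,h⟫ + t^2*‖h‖^2) (2*⟪u,h⟫) 0 := by
    have h1 : HasDerivAt (fun t:ℝ => 2*t*⟪u,h⟫) (2*⟪u,h⟫) 0 := by
      simpa using ((hasDerivAt_id (0:ℝ)).const_mul 2).mul_const ⟪u,h⟫
    have h2 : HasDerivAt (fun t:ℝ => t^2*‖h‖^2) 0 0 := by
      simpa using (hasDerivAt_pow 2 (0:ℝ)).mul_const (‖h‖^2)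
    have := (h1.add h2).const_add (‖u‖^2)
    simpa [add_assoc] using this
  have hr : HasDerivAt (fun x : ℝ => x ^ ((3:ℝ)/2))
      (((3:ℝ)/2) * (‖u‖^2 + 2*(0:ℝ)*⟪u,h⟫ + (0:ℝ)^2*‖h‖^2) ^ ((3:ℝ)/2 - 1))
      (‖u‖^2 + 2*(0:ℝ)*⟪u,h⟫ + (0:ℝ)^2*‖h‖^2) :=
    Real.hasDerivAt_rpow_const (Or.inr (by norm_num))
  have hcomp := (hr.comp 0 hq).const_mul (γ/3)
  have heq : γ * ‖u‖ * ⟪u,h⟫ = γ/3 * (((3:ℝ)/2) * (‖u‖^2 + 2*(0:ℝ)*⟪u,h⟫ + (0:ℝ)^2*‖h‖^2) ^ ((3:ℝ)/2 - 1)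
      * (2*⟪u,h⟫)) := by
    have hpow : (‖u‖^2 + 2*(0:ℝ)*⟪u,h⟫ + (0:ℝ)^2*‖h‖^2 : ℝ) ^ ((3:ℝ)/2 - 1) = ‖u‖ := by
      norm_num
      rw [← Real.rpow_natCast (‖u‖) 2, ← Real.rpow_mul (norm_nonneg _)]
      norm_num
    rw [hpow]; ring
  rw [funext hfun, heq]
  exact hcomp
/-- Gradient-dominance of the cubic-regularized function: if `ẑ` is a global
minimizer of `g(w) = f(w) + (γ/3)‖w − z̄‖³` then for every `z`,
`‖∇g(z)‖^{3/2} ≥ (3/2)√(γ/2)(g(z) − g(ẑ))`, equivalently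
`g(z) − g(ẑ) ≤ (2/3)√(2/γ)‖∇g(z)‖^{3/2}`. -/
theorem cubic_regularized_grad_dominance
    {E : Type*} [NormedAddCommGroup E] [InnerProductSpace ℝ E] [FiniteDimensional ℝ E]
    (f : E → ℝ) (hconv : ConvexOn ℝ Set.univ f)
    (f' : E → E) (hgrad : ∀ x : E, HasGradientAt f (f' x) x)
    (zbar : E) (γ : ℝ) (hγ : 0 < γ)
    (g : E → ℝ) (hg : ∀ x : E, g x = f x + γ / 3 * ‖x - zbar‖ ^ 3)
    (g' : E → E) (hg' : ∀ x : E, HasGradientAt g (g' x) x)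
    (zhat : E) (hmin : ∀ x : E, g zhat ≤ g x) :
    ∀ z : E,
      3 / 2 * Real.sqrt (γ / 2) * (g z - g zhat) ≤ ‖g' z‖ ^ ((3 : ℝ) / 2) ∧
        g z - g zhat ≤ 2 / 3 * Real.sqrt (2 / γ) * ‖g' z‖ ^ ((3 : ℝ) / 2) := by
  intro z
  -- inner product identity
  have hginner : ⟪g' z, zhat - z⟫ = ⟪f' z, zhat - z⟫
      + γ * ‖z - zbar‖ * ⟪z - zbar, zhat - z⟫ := by
    have hfd := grad_line_deriv (hgrad z) (zhat - z)
    have hgd := grad_line_deriv (hg' z) (zhat - z)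
    have hcd := cubic_line_deriv γ zbar z (zhat - z)
    have hsum := hfd.add hcd
    have hfun : (fun t : ℝ => f (z + t • (zhat - z)) + γ/3 * ‖z + t • (zhat - z) - zbar‖^3)
        = fun t : ℝ => g (z + t • (zhat - z)) := by
      funext t; rw [hg]
    simp only [Pi.add_def] at hsum; rw [hfun] at hsum
    exact hgd.unique hsum
  -- key uniform-convexity inequality
  have hkey : g z + ⟪g' z, zhat - z⟫ + γ/6 * ‖zhat - z‖^3 ≤ g zhat := by
    have hA := convex_first_order f hconv (hgrad z) zhat
    have hB := cubic_lower (z - zbar) (zhat - zbar)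
    have hvu : zhat - zbar - (z - zbar) = zhat - z := by abel
    rw [hvu] at hB
    have hB' := mul_le_mul_of_nonneg_left hB hγ.le
    rw [hg z, hg zhat]
    nlinarith [hB', hA, hginner]
  have hD : 0 ≤ g z - g zhat := by linarith [hmin z]
  have hcs : -⟪g' z, zhat - z⟫ ≤ ‖g' z‖ * ‖zhat - z‖ := by
    have h1 := abs_real_inner_le_norm (g' z) (zhat - z)
    have h2 := neg_le_of_abs_le h1
    linarith
  have hmain : g z - g zhat ≤ ‖g' z‖ * ‖zhat - z‖ - γ/6 * ‖zhat - z‖^3 := by linarith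
  have hσ0 : 0 ≤ Real.sqrt ‖g' z‖ := Real.sqrt_nonneg _
  have hβ0 : 0 ≤ Real.sqrt (2/γ) := Real.sqrt_nonneg _
  have hσ2 : Real.sqrt ‖g' z‖ ^ 2 = ‖g' z‖ := Real.sq_sqrt (norm_nonneg _)
  have hβ2 : Real.sqrt (2/γ) ^ 2 = 2/γ := Real.sq_sqrt (by positivity)
  have hγβ : γ * Real.sqrt (2/γ) ^ 2 = 2 := by rw [hβ2]; field_simp
  have hr0 : 0 ≤ ‖zhat - z‖ := norm_nonneg _
  have hyoung : ‖g' z‖ * ‖zhat - z‖ - γ/6 * ‖zhat - z‖^3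
      ≤ 2/3 * Real.sqrt (2/γ) * Real.sqrt ‖g' z‖ ^ 3 := by
    set σ := Real.sqrt ‖g' z‖ with hσdef
    set β := Real.sqrt (2/γ) with hβdef
    rw [← hσ2]
    have h2 : (0:ℝ) ≤ 2*β*σ + ‖zhat - z‖ :=
      add_nonneg (mul_nonneg (mul_nonneg (by norm_num) hβ0) hσ0) hr0
    have hfact := mul_nonneg (sq_nonneg (β*σ - ‖zhat - z‖)) h2
    have hβpos : (0:ℝ) < β := Real.sqrt_pos.2 (by positivity)
    have h3β : (0:ℝ) < 3*β^2 := by positivity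
    have key : 0 ≤ (2/3*β*σ^3 - (σ^2*‖zhat - z‖ - γ/6*‖zhat - z‖^3)) * (3*β^2) := by
      nlinarith [hfact, hγβ, mul_nonneg (mul_nonneg hr0 hr0) hr0]
    nlinarith [key, h3β]
  have hσ3 : Real.sqrt ‖g' z‖ ^ 3 = ‖g' z‖ ^ ((3:ℝ)/2) := by
    rw [Real.sqrt_eq_rpow, ← Real.rpow_natCast (‖g' z‖ ^ ((1:ℝ)/2)) 3,
      ← Real.rpow_mul (norm_nonneg _)]
    norm_num
  have hsecond : g z - g zhat ≤ 2/3 * Real.sqrt (2/γ) * ‖g' z‖ ^ ((3:ℝ)/2) := by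
    rw [← hσ3]; linarith
  refine ⟨?_, hsecond⟩
  have hprod : Real.sqrt (γ/2) * Real.sqrt (2/γ) = 1 := by
    rw [← Real.sqrt_mul (by positivity : (0:ℝ) ≤ γ/2),
      show (γ/2) * (2/γ) = 1 by field_simp]
    exact Real.sqrt_one
  have hsq : 0 ≤ Real.sqrt (γ/2) := Real.sqrt_nonneg _
  have hmul := mul_le_mul_of_nonneg_left hsecond hsq
  calc 3/2 * Real.sqrt (γ/2) * (g z - g zhat)
      ≤ 3/2 * (Real.sqrt (γ/2) * (2/3 * Real.sqrt (2/γ) * ‖g' z‖ ^ ((3:ℝ)/2))) := by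
        linarith
    _ = 3/2 * (2/3) * (Real.sqrt (γ/2) * Real.sqrt (2/γ)) * ‖g' z‖ ^ ((3:ℝ)/2) := by ring
    _ = ‖g' z‖ ^ ((3:ℝ)/2) := by rw [hprod]; ring
end

section
/- Let f : E → ℝ be twice differentiable with L-Lipschitz Hessian, fix z̄ ∈ E and γ > 0, and let g(w) := f(w) + (γ/3)‖w − z̄‖³. Then g is twice differentiable and has (L + 2γ)-Lipschitz Hessian: ‖∇²g(z) − ∇²g(z')‖ ≤ (L + 2γ)‖z − z'‖ in operator norm for all z, z'. -/
open scoped RealInnerProductSpace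

section CubicHelpers

variable {E : Type*} [NormedAddCommGroup E] [InnerProductSpace ℝ E]

-- derivative of the norm at a nonzero point
lemma hasFDerivAt_norm' {x : E} (hx : x ≠ 0) :
    HasFDerivAt (fun y : E => ‖y‖) (‖x‖⁻¹ • innerSL ℝ x) x := by
  have h1 : HasFDerivAt (fun y : E => ‖y‖ ^ 2) ((2:ℕ) • innerSL ℝ x) x :=
    (hasStrictFDerivAt_norm_sq x).hasFDerivAt
  have hx2 : ‖x‖ ^ 2 ≠ 0 := pow_ne_zero 2 (norm_ne_zero_iff.mpr hx)
  have h2 : HasDerivAt Real.sqrt (1 / (2 * Real.sqrt (‖x‖ ^ 2))) (‖x‖ ^ 2) :=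
    Real.hasDerivAt_sqrt hx2
  have h3 := h2.comp_hasFDerivAt x h1
  have hsq : Real.sqrt (‖x‖ ^ 2) = ‖x‖ := Real.sqrt_sq (norm_nonneg x)
  have hfun : (Real.sqrt ∘ fun y : E => ‖y‖ ^ 2) = fun y : E => ‖y‖ := by
    ext y; simp [Function.comp, Real.sqrt_sq (norm_nonneg y)]
  rw [hfun] at h3
  refine h3.congr_fderiv ?_
  ext v
  have : ‖x‖ ≠ 0 := norm_ne_zero_iff.mpr hx
  simp [hsq, smul_smul]
  field_simp

/-- Second derivative operator of `(1/3)‖x‖³`. -/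
noncomputable def cubeD (x : E) : E →L[ℝ] E :=
  ‖x‖ • ContinuousLinearMap.id ℝ E + ‖x‖⁻¹ • ((innerSL ℝ x).smulRight x)

lemma cubeD_apply (x v : E) : cubeD x v = ‖x‖ • v + (‖x‖⁻¹ * ⟪x, v⟫) • x := by
  simp [cubeD, mul_smul]

lemma hasFDerivAt_cubeC (x : E) :
    HasFDerivAt (fun y : E => ‖y‖ • y) (cubeD x) x := by
  by_cases hx : x = 0
  · subst hx
    have h0 : cubeD (0 : E) = 0 := by
      ext v; simp [cubeD_apply]
    rw [h0]
    rw [hasFDerivAt_iff_isLittleO_nhds_zero]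
    rw [Asymptotics.isLittleO_iff]
    intro c hc
    filter_upwards [Metric.closedBall_mem_nhds (0 : E) hc] with y hy
    have : ‖y‖ ≤ c := by simpa using hy
    simp only [zero_add, norm_zero, zero_smul, sub_zero, ContinuousLinearMap.zero_apply]
    rw [norm_smul, norm_norm]
    exact mul_le_mul_of_nonneg_right this (norm_nonneg _)
  · have h1 := (hasFDerivAt_norm' hx).smul (hasFDerivAt_id x)
    convert h1 using 1
    ext v
    have hnx : ‖x‖ ≠ 0 := norm_ne_zero_iff.mpr hx
    simp [cubeD_apply, mul_smul]
    ext v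
    simp [cubeD_apply, mul_smul]

lemma selfadjoint_norm_le (A : E →L[ℝ] E) (M : ℝ) (hM : 0 ≤ M)
    (hsym : ∀ v w : E, ⟪A v, w⟫ = ⟪v, A w⟫)
    (hq : ∀ v : E, |⟪A v, v⟫| ≤ M * ‖v‖ ^ 2) : ‖A‖ ≤ M := by
  refine A.opNorm_le_bound hM fun v => ?_
  have key : ∀ v w : E, ⟪A v, w⟫ ≤ M / 2 * (‖v‖ ^ 2 + ‖w‖ ^ 2) := by
    intro v w
    have h1 := (abs_le.mp (hq (v + w))).2
    have h2 := (abs_le.mp (hq (v - w))).1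
    have e1 : ⟪A (v + w), v + w⟫ = ⟪A v, v⟫ + ⟪A w, w⟫ + 2 * ⟪A v, w⟫ := by
      simp only [map_add, inner_add_left, inner_add_right]
      have h := (hsym w v).trans (real_inner_comm w (A v)).symm
      linarith [h]
    have e2 : ⟪A (v - w), v - w⟫ = ⟪A v, v⟫ + ⟪A w, w⟫ - 2 * ⟪A v, w⟫ := by
      simp only [map_sub, inner_sub_left, inner_sub_right]
      have h := (hsym w v).trans (real_inner_comm w (A v)).symm
      linarith [h]
    have hpar : ‖v + w‖ ^ 2 + ‖v - w‖ ^ 2 = 2 * (‖v‖ ^ 2 + ‖w‖ ^ 2) := by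
      have := parallelogram_law_with_norm ℝ v w
      nlinarith [this]
    nlinarith [h1, h2, e1, e2, hpar]
  by_cases hAv : A v = 0
  · simp [hAv]; positivity
  have hAvn : 0 < ‖A v‖ := norm_pos_iff.mpr hAv
  have := key v ((‖v‖ / ‖A v‖) • A v)
  rw [real_inner_smul_right, real_inner_self_eq_norm_sq] at this
  rw [norm_smul] at this
  have habs : ‖‖v‖ / ‖A v‖‖ = ‖v‖ / ‖A v‖ := by
    rw [Real.norm_eq_abs, abs_of_nonneg (by positivity)]
  rw [habs] at this
  have hv : 0 ≤ ‖v‖ := norm_nonneg v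
  by_cases hv0 : ‖v‖ = 0
  · have : v = 0 := norm_eq_zero.mp hv0
    simp [this] at hAv
  have hvpos : 0 < ‖v‖ := lt_of_le_of_ne hv (Ne.symm hv0)
  have hdiv : ‖v‖ / ‖A v‖ * ‖A v‖ ^ 2 = ‖v‖ * ‖A v‖ := by
    field_simp
  rw [hdiv] at this
  have hsq : (‖v‖ / ‖A v‖ * ‖A v‖) ^ 2 = ‖v‖ ^ 2 := by
    field_simp
  rw [hsq] at this
  nlinarith [this, hvpos, hAvn]

lemma scalar_key {r s d n α β : ℝ} (hs : 0 ≤ s) (hrs : s ≤ r)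
    (hn : 0 ≤ n) (hd : 0 ≤ d)
    (hα : |α| ≤ r * n) (hβ : |β| ≤ s * n)
    (hd1 : r - s ≤ d) (hd2 : |α - β| ≤ d * n) :
    |(r - s) * n ^ 2 + r⁻¹ * α ^ 2 - s⁻¹ * β ^ 2| ≤ 2 * d * n ^ 2 := by
  have hr : 0 ≤ r := le_trans hs hrs
  rcases eq_or_lt_of_le hs with hs0 | hspos
  · -- s = 0
    have hβ0 : β = 0 := by
      have h := hβ; rw [← hs0, zero_mul] at h
      exact abs_nonpos_iff.mp h
    subst hβ0
    rw [← hs0]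
    simp only [inv_zero, ne_eq, OfNat.ofNat_ne_zero, not_false_eq_true, zero_pow, mul_zero,
      sub_zero, zero_mul]
    rcases eq_or_lt_of_le hr with hr0 | hrpos
    · have hα0 : α = 0 := by
        have h := hα; rw [← hr0, zero_mul] at h
        exact abs_nonpos_iff.mp h
      subst hα0
      rw [← hr0]
      simp
      positivity
    · have h1 : r⁻¹ * α ^ 2 ≤ r * n ^ 2 := by
        rw [inv_mul_le_iff₀ hrpos]
        nlinarith [abs_le.mp hα, abs_nonneg α]
      have h2 : 0 ≤ r⁻¹ * α ^ 2 := by positivity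
      rw [abs_le]
      constructor <;> nlinarith
  · -- s > 0
    have hrpos : 0 < r := lt_of_lt_of_le hspos hrs
    have hid : (r - s) * n ^ 2 + r⁻¹ * α ^ 2 - s⁻¹ * β ^ 2
        = ((r - s) * (n ^ 2 * (r * s) - α * β) + (α - β) * (α * s + β * r)) / (r * s) := by
      field_simp
      ring
    have hab : α * β ≤ r * s * n ^ 2 := by
      calc α * β ≤ |α * β| := le_abs_self _
        _ = |α| * |β| := abs_mul α β
        _ ≤ (r * n) * (s * n) := by
            exact mul_le_mul hα hβ (abs_nonneg β) (by positivity)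
        _ = r * s * n ^ 2 := by ring
    have hab2 : -(r * s * n ^ 2) ≤ α * β := by
      have : -|α * β| ≤ α * β := neg_abs_le _
      have h2 : |α * β| ≤ r * s * n ^ 2 := by
        calc |α * β| = |α| * |β| := abs_mul α β
          _ ≤ (r * n) * (s * n) := mul_le_mul hα hβ (abs_nonneg β) (by positivity)
          _ = r * s * n ^ 2 := by ring
      linarith
    -- key: n * |α * s + β * r| ≤ r * s * n ^ 2 + α * β
    have hkey : n * |α * s + β * r| ≤ r * s * n ^ 2 + α * β := by
      have hrhs : 0 ≤ r * s * n ^ 2 + α * β := by linarith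
      have hfac : (r * s * n ^ 2 + α * β) ^ 2 - (n * |α * s + β * r|) ^ 2
          = (n ^ 2 * s ^ 2 - β ^ 2) * (n ^ 2 * r ^ 2 - α ^ 2) := by
        rw [mul_pow, sq_abs]
        ring
      have hf1 : 0 ≤ n ^ 2 * s ^ 2 - β ^ 2 := by
        nlinarith [abs_le.mp hβ, abs_nonneg β]
      have hf2 : 0 ≤ n ^ 2 * r ^ 2 - α ^ 2 := by
        nlinarith [abs_le.mp hα, abs_nonneg α]
      nlinarith [mul_nonneg hf1 hf2, abs_nonneg (α * s + β * r), mul_nonneg hn (abs_nonneg (α * s + β * r))]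
    -- bound the numerator
    have hnum_up : (r - s) * (n ^ 2 * (r * s) - α * β) + (α - β) * (α * s + β * r)
        ≤ 2 * d * n ^ 2 * (r * s) := by
      have t1 : (r - s) * (n ^ 2 * (r * s) - α * β) ≤ d * (n ^ 2 * (r * s) - α * β) :=
        mul_le_mul_of_nonneg_right hd1 (by linarith [hab])
      have t2 : (α - β) * (α * s + β * r) ≤ (d * n) * |α * s + β * r| := by
        calc (α - β) * (α * s + β * r) ≤ |(α - β) * (α * s + β * r)| := le_abs_self _
          _ = |α - β| * |α * s + β * r| := abs_mul _ _
          _ ≤ (d * n) * |α * s + β * r| :=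
              mul_le_mul_of_nonneg_right hd2 (abs_nonneg _)
      have t3 : (d * n) * |α * s + β * r| ≤ d * (r * s * n ^ 2 + α * β) := by
        calc (d * n) * |α * s + β * r| = d * (n * |α * s + β * r|) := by ring
          _ ≤ d * (r * s * n ^ 2 + α * β) := mul_le_mul_of_nonneg_left hkey hd
      have hsum : d * (n ^ 2 * (r * s) - α * β) + d * (r * s * n ^ 2 + α * β)
          = 2 * d * n ^ 2 * (r * s) := by ring
      linarith
    have hnum_lo : -(2 * d * n ^ 2 * (r * s))
        ≤ (r - s) * (n ^ 2 * (r * s) - α * β) + (α - β) * (α * s + β * r) := by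
      have t1 : 0 ≤ (r - s) * (n ^ 2 * (r * s) - α * β) :=
        mul_nonneg (by linarith) (by linarith [hab])
      have t2 : -((d * n) * |α * s + β * r|) ≤ (α - β) * (α * s + β * r) := by
        have h1 : -|(α - β) * (α * s + β * r)| ≤ (α - β) * (α * s + β * r) := neg_abs_le _
        have h2 : |(α - β) * (α * s + β * r)| ≤ (d * n) * |α * s + β * r| := by
          rw [abs_mul]
          exact mul_le_mul_of_nonneg_right hd2 (abs_nonneg _)
        linarith
      have t3 : (d * n) * |α * s + β * r| ≤ d * (r * s * n ^ 2 + α * β) := by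
        calc (d * n) * |α * s + β * r| = d * (n * |α * s + β * r|) := by ring
          _ ≤ d * (r * s * n ^ 2 + α * β) := mul_le_mul_of_nonneg_left hkey hd
      have h4 : d * (α * β) ≤ d * (r * s * n ^ 2) := mul_le_mul_of_nonneg_left hab hd
      have hsum : d * (r * s * n ^ 2 + α * β) = d * (r * s * n ^ 2) + d * (α * β) := by ring
      have hsum2 : d * (r * s * n ^ 2) + d * (r * s * n ^ 2) = 2 * d * n ^ 2 * (r * s) := by ring
      linarith
    rw [hid, abs_le]
    have hrs_pos : 0 < r * s := mul_pos hrpos hspos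
    constructor
    · rw [le_div_iff₀ hrs_pos]
      calc -(2 * d * n ^ 2) * (r * s) = -(2 * d * n ^ 2 * (r * s)) := by ring
        _ ≤ _ := hnum_lo
    · rw [div_le_iff₀ hrs_pos]
      calc _ ≤ 2 * d * n ^ 2 * (r * s) := hnum_up
        _ = 2 * d * n ^ 2 * (r * s) := rfl

lemma cubeD_lip_aux {p q : E} (h : ‖q‖ ≤ ‖p‖) : ‖cubeD p - cubeD q‖ ≤ 2 * ‖p - q‖ := by
  apply selfadjoint_norm_le _ _ (by positivity)
  · intro v w
    simp only [ContinuousLinearMap.sub_apply, inner_sub_left, inner_sub_right, cubeD_apply,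
      inner_add_left, inner_add_right, real_inner_smul_left, real_inner_smul_right]
    rw [real_inner_comm v p, real_inner_comm v q]
    ring
  · intro v
    have hQ : ⟪(cubeD p - cubeD q) v, v⟫
        = (‖p‖ - ‖q‖) * ‖v‖ ^ 2 + ‖p‖⁻¹ * ⟪p, v⟫ ^ 2 - ‖q‖⁻¹ * ⟪q, v⟫ ^ 2 := by
      simp only [ContinuousLinearMap.sub_apply, inner_sub_left, cubeD_apply,
        inner_add_left, real_inner_smul_left, real_inner_self_eq_norm_sq]
      rw [real_inner_comm v p, real_inner_comm v q]
      ring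
    rw [hQ]
    exact scalar_key (norm_nonneg q) h (norm_nonneg v) (norm_nonneg _)
      (abs_real_inner_le_norm p v) (abs_real_inner_le_norm q v) (norm_sub_norm_le p q)
      (by rw [← inner_sub_left]; exact abs_real_inner_le_norm _ v)

lemma cubeD_lip (p q : E) : ‖cubeD p - cubeD q‖ ≤ 2 * ‖p - q‖ := by
  rcases le_total ‖q‖ ‖p‖ with h | h
  · exact cubeD_lip_aux h
  · rw [norm_sub_rev, norm_sub_rev p q]
    exact cubeD_lip_aux h

end CubicHelpers

/-- The cubic-regularized function `g(w) = f(w) + (γ/3)‖w − z̄‖³` of a twice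
differentiable `f` with `L`-Lipschitz Hessian is twice differentiable with
`(L + 2γ)`-Lipschitz Hessian. -/
theorem cubic_regularized_hessian_lipschitz
    {E : Type*} [NormedAddCommGroup E] [InnerProductSpace ℝ E] [FiniteDimensional ℝ E]
    (f : E → ℝ) (f' : E → E) (f'' : E → E →L[ℝ] E) (L : ℝ)
    (hgrad : ∀ x : E, HasGradientAt f (f' x) x)
    (hhess : ∀ x : E, HasFDerivAt f' (f'' x) x)
    (hLip : ∀ x y : E, ‖f'' x - f'' y‖ ≤ L * ‖x - y‖)
    (zbar : E) (γ : ℝ) (hγ : 0 < γ)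
    (g : E → ℝ) (hg : ∀ x : E, g x = f x + γ / 3 * ‖x - zbar‖ ^ 3) :
    ∃ (g' : E → E) (g'' : E → E →L[ℝ] E),
      (∀ x : E, HasGradientAt g (g' x) x) ∧
        (∀ x : E, HasFDerivAt g' (g'' x) x) ∧
          ∀ x y : E, ‖g'' x - g'' y‖ ≤ (L + 2 * γ) * ‖x - y‖ := by
  have hgfun : g = fun x => f x + γ / 3 * ‖x - zbar‖ ^ 3 := funext hg
  subst hgfun
  have htrans : ∀ x : E, HasFDerivAt (fun y : E => y - zbar) (ContinuousLinearMap.id ℝ E) x :=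
    fun x => (hasFDerivAt_id x).sub_const zbar
  have hC : ∀ x : E, HasFDerivAt (fun y : E => ‖y - zbar‖ • (y - zbar)) (cubeD (x - zbar)) x := by
    intro x
    have h := (hasFDerivAt_cubeC (x - zbar)).comp x (htrans x)
    simpa [Function.comp_def] using h
  refine ⟨fun x => f' x + γ • (‖x - zbar‖ • (x - zbar)),
    fun x => f'' x + γ • cubeD (x - zbar), ?_, ?_, ?_⟩
  · intro x
    rw [hasGradientAt_iff_hasFDerivAt]
    have hcube0 : HasFDerivAt (fun y : E => ‖y - zbar‖ ^ (3:ℝ))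
        (((3:ℝ) * ‖x - zbar‖ ^ ((3:ℝ) - 2)) • innerSL ℝ (x - zbar)) x := by
      have h := (hasFDerivAt_norm_rpow (x - zbar) (by norm_num : (1:ℝ) < 3)).comp x (htrans x)
      simpa [Function.comp_def] using h
    have hcube : HasFDerivAt (fun y : E => ‖y - zbar‖ ^ (3:ℕ))
        (((3:ℝ) * ‖x - zbar‖ ^ ((3:ℝ) - 2)) • innerSL ℝ (x - zbar)) x := by
      have : (fun y : E => ‖y - zbar‖ ^ (3:ℝ)) = fun y : E => ‖y - zbar‖ ^ (3:ℕ) := by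
        ext y; rw [← Real.rpow_natCast (‖y - zbar‖) 3]; norm_num
      rwa [this] at hcube0
    have hsum := ((hgrad x).hasFDerivAt).add (hcube.const_mul (γ / 3))
    refine hsum.congr_fderiv ?_
    ext v
    have h32 : ((3:ℝ) - 2) = 1 := by norm_num
    simp only [map_add, map_smul, ContinuousLinearMap.add_apply, ContinuousLinearMap.smul_apply,
      InnerProductSpace.toDual_apply_apply, h32, Real.rpow_one, innerSL_apply_apply, smul_eq_mul,
      inner_add_left, real_inner_smul_left]
    ring
  · intro x
    exact (hhess x).add ((hC x).const_smul γ)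
  · intro x y
    have hre : (f'' x + γ • cubeD (x - zbar)) - (f'' y + γ • cubeD (y - zbar))
        = (f'' x - f'' y) + γ • (cubeD (x - zbar) - cubeD (y - zbar)) := by
      rw [smul_sub]; abel
    rw [hre]
    have h1 := norm_add_le (f'' x - f'' y) (γ • (cubeD (x - zbar) - cubeD (y - zbar)))
    have h2 : ‖γ • (cubeD (x - zbar) - cubeD (y - zbar))‖
        = γ * ‖cubeD (x - zbar) - cubeD (y - zbar)‖ := by
      rw [norm_smul γ (cubeD (x - zbar) - cubeD (y - zbar)), Real.norm_eq_abs, abs_of_pos hγ]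
    have h3 := cubeD_lip (x - zbar) (y - zbar)
    rw [sub_sub_sub_cancel_right] at h3
    have h4 := hLip x y
    have h5 : γ * ‖cubeD (x - zbar) - cubeD (y - zbar)‖ ≤ γ * (2 * ‖x - y‖) :=
      mul_le_mul_of_nonneg_left h3 (le_of_lt hγ)
    calc ‖(f'' x - f'' y) + γ • (cubeD (x - zbar) - cubeD (y - zbar))‖
        ≤ ‖f'' x - f'' y‖ + ‖γ • (cubeD (x - zbar) - cubeD (y - zbar))‖ := h1
      _ ≤ L * ‖x - y‖ + γ * (2 * ‖x - y‖) := by rw [h2]; exact add_le_add h4 h5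
      _ = (L + 2 * γ) * ‖x - y‖ := by ring
end

section
/- Let f : E → ℝ be convex and differentiable, fix z̄ ∈ E and γ > 0, let g(w) := f(w) + (γ/3)‖w − z̄‖³ with gradient ∇g, and let ẑ be a global minimizer of g. Let M > 0, let m ≥ 1 and S ≥ 1 be integers, and suppose points u_0, …, u_S ∈ E and z_{s,t} ∈ E (0 ≤ s ≤ S−1, 0 ≤ t ≤ m) satisfy z_{s,0} = u_s, u_{s+1} = (1/m)·Σ_{t=1}^{m} z_{s,t}, and the per-epoch descent inequality g(u_s) − g(u_{s+1}) ≥ (1/(72√(2M)))·Σ_{t=0}^{m−1} ‖∇g(z_{s,t+1})‖^{3/2} for each s. Then, with β := (m/96)·√(γ/M), one has g(u_S) − g(ẑ) ≤ exp(−β·S/(β + 1))·(g(u_0) − g(ẑ)). -/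
set_option maxHeartbeats 1000000


open scoped RealInnerProductSpace

section Aux

variable {E : Type*} [NormedAddCommGroup E] [InnerProductSpace ℝ E]

/-- Bregman-type lower bound for the cube of the norm. -/
lemma aux_cube_bregman (a b : E) :
    ‖a‖ * ⟪a, b - a⟫ + (1/6)*‖b-a‖^3 ≤ (1/3)*‖b‖^3 - (1/3)*‖a‖^3 := by
  set r := ‖a‖ with hr'
  set s := ‖b‖ with hs'
  set d := ‖b - a‖ with hd'
  set c := ⟪a, b⟫ with hc'
  have hr : 0 ≤ r := norm_nonneg _
  have hs : 0 ≤ s := norm_nonneg _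
  have hd : 0 ≤ d := norm_nonneg _
  have h2 : d^2 = r^2 + s^2 - 2*c := by
    rw [hd', hr', hs', hc', norm_sub_sq_real]
    rw [real_inner_comm]; ring
  have h4 : -(r*s) ≤ c := neg_le_of_abs_le (abs_real_inner_le_norm a b)
  have hib : ⟪a, b - a⟫ = c - r^2 := by
    rw [inner_sub_right, hc', hr', real_inner_self_eq_norm_sq]
  rw [hib]
  have h5 : d ≤ r + s := by nlinarith [sq_nonneg (d - (r+s)), sq_nonneg (d + (r+s))]
  rcases le_or_gt d (3*r) with hcase | hcase
  · nlinarith [mul_nonneg (sq_nonneg (s-r)) (by linarith : (0:ℝ) ≤ 2*s+r),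
      mul_nonneg (mul_nonneg hd hd) (by linarith : (0:ℝ) ≤ 3*r - d)]
  · have hsr : 2*r < s := by linarith
    nlinarith [mul_nonneg (sq_nonneg (s-r)) (by linarith : (0:ℝ) ≤ 2*s+r),
      mul_nonneg (mul_nonneg (by linarith : (0:ℝ) ≤ r+s-d)
        (by linarith : (0:ℝ) ≤ r+s+d)) (by linarith : (0:ℝ) ≤ d - 3*r),
      mul_nonneg (mul_nonneg (by linarith : (0:ℝ) ≤ s-r) (by linarith : (0:ℝ) ≤ s-r))
        (by linarith : (0:ℝ) ≤ s-r),
      mul_nonneg (mul_nonneg (by linarith : (0:ℝ) ≤ r+s) (by linarith : (0:ℝ) ≤ r+s))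
        (by linarith : (0:ℝ) ≤ s - 2*r - (d - 3*r))]

lemma aux_cubic_jensen (a X Y : ℝ) (ha : 0 ≤ a) (ha1 : a ≤ 1) (hX : 0 ≤ X) (hY : 0 ≤ Y) :
    (a*X+(1-a)*Y)^3 ≤ a*X^3+(1-a)*Y^3 := by
  have ht : 0 ≤ a*X+(1-a)*Y := add_nonneg (mul_nonneg ha hX) (mul_nonneg (by linarith) hY)
  have e1 : 0 ≤ (X-(a*X+(1-a)*Y))^2*(X+2*(a*X+(1-a)*Y)) :=
    mul_nonneg (sq_nonneg _) (by linarith)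
  have e2 : 0 ≤ (Y-(a*X+(1-a)*Y))^2*(Y+2*(a*X+(1-a)*Y)) :=
    mul_nonneg (sq_nonneg _) (by linarith)
  nlinarith [mul_nonneg ha e1, mul_nonneg (by linarith : (0:ℝ) ≤ 1-a) e2]

variable [CompleteSpace E]

/-- The gradient of `‖·‖³`. -/
lemma aux_grad_cube (x : E) : HasGradientAt (fun w : E => ‖w‖^3) ((3*‖x‖) • x) x := by
  have hinner : HasFDerivAt (fun w : E => (⟪w, w⟫ : ℝ))
      (fderivInnerCLM ℝ (x, x) ∘L
        (ContinuousLinearMap.id ℝ E).prod (ContinuousLinearMap.id ℝ E)) x :=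
    (hasFDerivAt_id x).inner ℝ (hasFDerivAt_id x)
  have hrpow : HasDerivAt (fun t : ℝ => t ^ ((3:ℝ)/2))
      (((3:ℝ)/2) * (⟪x, x⟫ : ℝ) ^ ((3:ℝ)/2 - 1)) (⟪x, x⟫ : ℝ) :=
    Real.hasDerivAt_rpow_const (Or.inr (by norm_num))
  have hcomp : HasFDerivAt (fun w : E => (⟪w, w⟫ : ℝ) ^ ((3:ℝ)/2))
      ((((3:ℝ)/2) * (⟪x, x⟫ : ℝ) ^ ((3:ℝ)/2 - 1)) •
        (fderivInnerCLM ℝ (x, x) ∘L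
          (ContinuousLinearMap.id ℝ E).prod (ContinuousLinearMap.id ℝ E))) x :=
    hrpow.comp_hasFDerivAt (f := fun w : E => (⟪w, w⟫ : ℝ)) x hinner
  have heq : (fun w : E => (⟪w, w⟫ : ℝ) ^ ((3:ℝ)/2)) = fun w : E => ‖w‖^3 := by
    funext w
    rw [real_inner_self_eq_norm_sq, ← Real.rpow_natCast ‖w‖ 2,
      ← Real.rpow_mul (norm_nonneg w), ← Real.rpow_natCast ‖w‖ 3]
    norm_num
  rw [heq] at hcomp
  rw [hasGradientAt_iff_hasFDerivAt]
  refine hcomp.congr_fderiv ?_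
  have hx : (⟪x, x⟫ : ℝ) ^ ((3:ℝ)/2 - 1) = ‖x‖ := by
    rw [real_inner_self_eq_norm_sq, ← Real.rpow_natCast ‖x‖ 2,
      ← Real.rpow_mul (norm_nonneg x)]
    norm_num
  ext h
  rw [hx]
  simp [fderivInnerCLM_apply, real_inner_smul_left, real_inner_comm, hx]
  ring

/-- The gradient of the shifted cube of the norm. -/
lemma aux_grad_cube_shift (zbar x : E) :
    HasGradientAt (fun w : E => ‖w - zbar‖^3) ((3*‖x - zbar‖) • (x - zbar)) x := by
  have h0 := aux_grad_cube (x - zbar)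
  rw [hasGradientAt_iff_hasFDerivAt] at h0 ⊢
  have ht : HasFDerivAt (fun w : E => w - zbar) (ContinuousLinearMap.id ℝ E) x :=
    (hasFDerivAt_id x).sub_const zbar
  have := h0.comp x ht
  exact this

/-- Subgradient inequality for a convex differentiable function. -/
lemma aux_convex_subgrad {f : E → ℝ} (hconv : ConvexOn ℝ Set.univ f)
    {f' : E → E} (hgrad : ∀ x : E, HasGradientAt f (f' x) x) (x y : E) :
    f x + ⟪f' x, y - x⟫ ≤ f y := by
  set c : ℝ → E := fun t => x + t • (y - x) with hc
  have hc0 : c 0 = x := by simp [hc]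
  have hc1 : c 1 = y := by simp [hc]
  have hφconv : ConvexOn ℝ Set.univ (f ∘ c) := by
    have := hconv.comp_affineMap
      (AffineMap.lineMap x y : ℝ →ᵃ[ℝ] E)
    have hcl : c = fun t : ℝ => (AffineMap.lineMap x y : ℝ →ᵃ[ℝ] E) t := by
      funext t; simp [hc, AffineMap.lineMap_apply]
      abel
    rw [hcl]
    simpa using this
  have hcd : HasDerivAt c (y - x) 0 := by
    have : HasDerivAt (fun t : ℝ => t • (y - x)) ((1:ℝ) • (y - x)) 0 :=
      (hasDerivAt_id (0:ℝ)).smul_const (y - x)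
    rw [hc]
    simpa using this.const_add x
  have hfd : HasFDerivAt f (InnerProductSpace.toDual ℝ E (f' x)) (c 0) := by
    rw [hc0]; exact (hgrad x).hasFDerivAt
  have hφd : HasDerivAt (f ∘ c) ⟪f' x, y - x⟫ 0 := by
    have := hfd.comp_hasDerivAt 0 hcd
    simpa using this
  have hs := hφconv.le_slope_of_hasDerivAt (Set.mem_univ (0:ℝ)) (Set.mem_univ (1:ℝ))
    one_pos hφd
  have hsl : slope (f ∘ c) 0 1 = f y - f x := by
    rw [slope_def_field]
    simp [hc0, hc1]
  rw [hsl] at hs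
  linarith

end Aux

/-- Linear convergence of the lazy-CRN epochs in the MS-solver: if each epoch of `m`
lazy cubic-Newton steps satisfies the per-epoch descent inequality, then the epoch
iterates converge linearly to the minimum of the cubic-regularized function `g`. -/
theorem ms_solver_linear_convergence
    {E : Type*} [NormedAddCommGroup E] [InnerProductSpace ℝ E] [FiniteDimensional ℝ E]
    (f : E → ℝ) (hconv : ConvexOn ℝ Set.univ f)
    (f' : E → E) (hgrad : ∀ x : E, HasGradientAt f (f' x) x)
    (zbar : E) (γ : ℝ) (hγ : 0 < γ)
    (g : E → ℝ) (hg : ∀ x : E, g x = f x + γ / 3 * ‖x - zbar‖ ^ 3)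
    (g' : E → E) (hg' : ∀ x : E, HasGradientAt g (g' x) x)
    (zhat : E) (hmin : ∀ x : E, g zhat ≤ g x)
    (M : ℝ) (hM : 0 < M) (m S : ℕ) (hm : 1 ≤ m) (hS : 1 ≤ S)
    (u : ℕ → E) (zst : ℕ → ℕ → E)
    (hinit : ∀ s < S, zst s 0 = u s)
    (havg : ∀ s < S, u (s + 1) = ((m : ℝ)⁻¹) • ∑ t ∈ Finset.Icc 1 m, zst s t)
    (hdescent : ∀ s < S,
      (1 / (72 * Real.sqrt (2 * M))) *
          ∑ t ∈ Finset.range m, ‖g' (zst s (t + 1))‖ ^ ((3 : ℝ) / 2)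
        ≤ g (u s) - g (u (s + 1)))
    (β : ℝ) (hβ : β = (m : ℝ) / 96 * Real.sqrt (γ / M)) :
    g (u S) - g zhat ≤ Real.exp (-(β * S) / (β + 1)) * (g (u 0) - g zhat) := by
  -- Notation and basic positivity facts
  have hmpos : (0:ℝ) < m := by exact_mod_cast hm
  have hγ' : γ ≠ 0 := ne_of_gt hγ
  have hM' : M ≠ 0 := ne_of_gt hM
  -- the gradient of g
  have hg'eq : ∀ x : E, g' x = f' x + (γ * ‖x - zbar‖) • (x - zbar) := by
    intro x
    have h1 : HasFDerivAt f (InnerProductSpace.toDual ℝ E (f' x)) x := (hgrad x).hasFDerivAt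
    have h2 : HasFDerivAt (fun w : E => ‖w - zbar‖^3)
        (InnerProductSpace.toDual ℝ E ((3*‖x - zbar‖) • (x - zbar))) x :=
      (aux_grad_cube_shift zbar x).hasFDerivAt
    have h3 := h1.add (h2.const_mul (γ/3))
    have h4 : HasGradientAt g (f' x + (γ * ‖x - zbar‖) • (x - zbar)) x := by
      rw [hasGradientAt_iff_hasFDerivAt]
      have hfun : g = fun w => f w + γ/3 * ‖w - zbar‖^3 := funext hg
      rw [hfun]
      refine h3.congr_fderiv ?_
      ext v
      simp [inner_add_left, real_inner_smul_left]
      ring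
    exact ((hg' x).unique h4)
  -- strong convexity of g
  have hstrong : ∀ x y : E, g x + ⟪g' x, y - x⟫ + γ/6 * ‖y - x‖^3 ≤ g y := by
    intro x y
    have hb := aux_cube_bregman (x - zbar) (y - zbar)
    rw [sub_sub_sub_cancel_right] at hb
    have hbγ : γ * (‖x - zbar‖ * ⟪x - zbar, y - x⟫ + (1/6)*‖y - x‖^3)
        ≤ γ * ((1/3)*‖y - zbar‖^3 - (1/3)*‖x - zbar‖^3) :=
      mul_le_mul_of_nonneg_left hb hγ.le
    have hf := aux_convex_subgrad hconv hgrad x y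
    have hinner : ⟪g' x, y - x⟫ = ⟪f' x, y - x⟫ + γ * ‖x - zbar‖ * ⟪x - zbar, y - x⟫ := by
      rw [hg'eq x, inner_add_left, real_inner_smul_left]
    rw [hg x, hg y, hinner]
    nlinarith [hbγ, hf]
  -- gradient dominance
  have hdom : ∀ x : E, g x - g zhat ≤ (2/3) * Real.sqrt (2/γ) * ‖g' x‖ ^ ((3:ℝ)/2) := by
    intro x
    have hst := hstrong x zhat
    set G := ‖g' x‖ with hG'
    set d := ‖zhat - x‖ with hd'
    have hGnn : 0 ≤ G := norm_nonneg _
    have hdnn : 0 ≤ d := norm_nonneg _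
    have hinner : -(G * d) ≤ ⟪g' x, zhat - x⟫ :=
      neg_le_of_abs_le (abs_real_inner_le_norm _ _)
    have hkey : g x - g zhat ≤ G * d - γ/6 * d^3 := by linarith
    set c := Real.sqrt (γ/2) with hc'
    set v := Real.sqrt G with hv'
    have hcpos : 0 < c := Real.sqrt_pos.2 (by positivity)
    have hvnn : 0 ≤ v := Real.sqrt_nonneg _
    have hc2 : c^2 = γ/2 := Real.sq_sqrt (by positivity)
    have hv2 : v^2 = G := Real.sq_sqrt hGnn
    have hsqinv : Real.sqrt (2/γ) = c⁻¹ := by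
      rw [hc', ← Real.sqrt_inv, inv_div]
    have hpow : G ^ ((3:ℝ)/2) = v^3 := by
      rw [← hv2, ← Real.rpow_natCast v 2, ← Real.rpow_mul hvnn, ← Real.rpow_natCast v 3]
      norm_num
    rw [hsqinv, hpow]
    have hkey2 : (v^2 * d - (2*c^2)/6 * d^3) * (3*c) ≤ 2 * v^3 := by
      have hexp : 0 ≤ (v - c*d)^2 * (2*v + c*d) :=
        mul_nonneg (sq_nonneg _) (by positivity)
      nlinarith [hexp]
    have hγc : γ = 2*c^2 := by linarith [hc2]
    have hfin : G * d - γ/6 * d^3 ≤ 2/3 * c⁻¹ * v^3 := by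
      rw [← hv2, hγc,
        show (2:ℝ)/3 * c⁻¹ * v^3 = (2*v^3)/(3*c) by
          rw [eq_div_iff (by positivity : ((3:ℝ)*c) ≠ 0)]
          first
          | (field_simp; ring)
          | field_simp,
        le_div_iff₀ (by positivity)]
      exact hkey2
    linarith
  -- convexity of g
  have hconvg : ConvexOn ℝ Set.univ g := by
    have hn : ConvexOn ℝ Set.univ (fun w : E => ‖w - zbar‖) := by
      refine ⟨convex_univ, fun x _ y _ a b ha hb hab => ?_⟩
      have h1 : a • x + b • y - zbar = a • (x - zbar) + b • (y - zbar) := by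
        calc a • x + b • y - zbar = a • x + b • y - (a+b) • zbar := by rw [hab, one_smul]
          _ = a • (x - zbar) + b • (y - zbar) := by
              rw [add_smul, smul_sub, smul_sub]; abel
      calc ‖a • x + b • y - zbar‖ = ‖a • (x - zbar) + b • (y - zbar)‖ := by rw [h1]
        _ ≤ ‖a • (x - zbar)‖ + ‖b • (y - zbar)‖ := norm_add_le _ _
        _ = a * ‖x - zbar‖ + b * ‖y - zbar‖ := by
            rw [norm_smul, norm_smul, Real.norm_eq_abs, Real.norm_eq_abs,
              abs_of_nonneg ha, abs_of_nonneg hb]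
    have hcube : ConvexOn ℝ Set.univ (fun w : E => ‖w - zbar‖^3) := by
      refine ⟨convex_univ, fun x _ y _ a b ha hb hab => ?_⟩
      simp only [smul_eq_mul]
      have h2 := hn.2 (Set.mem_univ x) (Set.mem_univ y) ha hb hab
      simp only [smul_eq_mul] at h2
      have hXn : (0:ℝ) ≤ ‖x - zbar‖ := norm_nonneg _
      have hYn : (0:ℝ) ≤ ‖y - zbar‖ := norm_nonneg _
      calc ‖a • x + b • y - zbar‖^3 ≤ (a*‖x - zbar‖+b*‖y - zbar‖)^3 :=
            pow_le_pow_left₀ (norm_nonneg _) h2 3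
        _ ≤ a*‖x - zbar‖^3+b*‖y - zbar‖^3 := by
            have hb' : b = 1 - a := by linarith
            rw [hb']
            exact aux_cubic_jensen a _ _ ha (by linarith) hXn hYn
    have hsmul : ConvexOn ℝ Set.univ (fun w : E => γ/3 * ‖w - zbar‖^3) := by
      have := hcube.smul (c := γ/3) (by positivity)
      simpa [smul_eq_mul] using this
    have hadd := hconv.add hsmul
    have hfun : g = fun w => f w + γ/3 * ‖w - zbar‖^3 := funext hg
    rw [hfun]
    exact hadd
  -- constants
  set K := 1 / (72 * Real.sqrt (2*M)) with hK'
  set C := (2:ℝ)/3 * Real.sqrt (2/γ) with hC'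
  clear_value K C
  have hs2M : 0 < Real.sqrt (2*M) := Real.sqrt_pos.2 (by positivity)
  have hKpos : 0 < K := by rw [hK']; positivity
  have hCpos : 0 < C := by
    rw [hC']
    have : 0 < Real.sqrt (2/γ) := Real.sqrt_pos.2 (by positivity)
    positivity
  have hβ0 : 0 ≤ β := by
    rw [hβ]; positivity
  have hKC : β * C = (m:ℝ) * K := by
    have e1 : Real.sqrt (γ/M) * Real.sqrt (2/γ) * Real.sqrt (2*M) = 2 := by
      rw [← Real.sqrt_mul (by positivity), ← Real.sqrt_mul (by positivity),
        show γ/M*(2/γ)*(2*M) = 4 by field_simp; ring,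
        show (4:ℝ) = 2^2 by norm_num, Real.sqrt_sq (by norm_num)]
    have e2 : β * C * (72 * Real.sqrt (2*M)) = m := by
      rw [hβ, hC']
      linear_combination ((m:ℝ)/2) * e1
    have h72 : (72:ℝ) * Real.sqrt (2*M) ≠ 0 := by positivity
    rw [hK', mul_one_div, eq_div_iff h72]
    exact e2
  -- per-epoch contraction
  have hDnn : ∀ n, 0 ≤ g (u n) - g zhat := fun n => sub_nonneg.2 (hmin (u n))
  have hstep : ∀ s < S, (g (u (s+1)) - g zhat) * (1 + β) ≤ g (u s) - g zhat := by
    intro s hsS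
    set Sg := ∑ t ∈ Finset.range m, ‖g' (zst s (t + 1))‖ ^ ((3:ℝ)/2) with hSg
    clear_value Sg
    have hdesc : K * Sg ≤ g (u s) - g (u (s+1)) := by
      rw [hSg]; exact hdescent s hsS
    -- Jensen
    have hJ : g (u (s+1)) ≤ (m:ℝ)⁻¹ * ∑ t ∈ Finset.range m, g (zst s (t+1)) := by
      have hmem : ∀ t ∈ Finset.Icc 1 m, zst s t ∈ (Set.univ : Set E) :=
        fun _ _ => Set.mem_univ _
      have hw0 : ∀ t ∈ Finset.Icc 1 m, (0:ℝ) ≤ (m:ℝ)⁻¹ := fun _ _ => by positivity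
      have hw1 : ∑ _t ∈ Finset.Icc 1 m, (m:ℝ)⁻¹ = 1 := by
        rw [Finset.sum_const, Nat.card_Icc]
        simp only [Nat.add_sub_cancel, nsmul_eq_mul]
        field_simp
      have hJen := hconvg.map_sum_le hw0 hw1 hmem
      have hpt : ∑ t ∈ Finset.Icc 1 m, (m:ℝ)⁻¹ • zst s t
          = ((m:ℝ)⁻¹) • ∑ t ∈ Finset.Icc 1 m, zst s t := by
        rw [Finset.smul_sum]
      rw [hpt] at hJen
      rw [havg s hsS]
      refine hJen.trans (le_of_eq ?_)
      simp only [smul_eq_mul]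
      rw [← Finset.mul_sum]
      congr 1
      rw [show Finset.Icc 1 m = Finset.Ico 1 (m+1) by rw [Finset.Ico_add_one_right_eq_Icc],
        Finset.sum_Ico_eq_sum_range]
      simp [add_comm]
    -- sum bound via gradient dominance
    have h1 : ∑ t ∈ Finset.range m, (g (zst s (t+1)) - g zhat) ≤ C * Sg := by
      rw [hSg, Finset.mul_sum]
      exact Finset.sum_le_sum fun t _ => hdom _
    have h2 : (m:ℝ) * (g (u (s+1)) - g zhat)
        ≤ ∑ t ∈ Finset.range m, (g (zst s (t+1)) - g zhat) := by
      have h3 : ∑ t ∈ Finset.range m, (g (zst s (t+1)) - g zhat)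
          = (∑ t ∈ Finset.range m, g (zst s (t+1))) - (m:ℝ) * g zhat := by
        rw [Finset.sum_sub_distrib, Finset.sum_const, Finset.card_range, nsmul_eq_mul]
      rw [h3]
      have h6 := mul_le_mul_of_nonneg_left hJ hmpos.le
      rw [← mul_assoc, mul_inv_cancel₀ (ne_of_gt hmpos), one_mul] at h6
      nlinarith [h6]
    have h4 : β * (g (u (s+1)) - g zhat) * C ≤ K * Sg * C := by
      calc β * (g (u (s+1)) - g zhat) * C
          = K * ((m:ℝ) * (g (u (s+1)) - g zhat)) := by
            linear_combination (g (u (s+1)) - g zhat) * hKC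
        _ ≤ K * (C * Sg) :=
            mul_le_mul_of_nonneg_left (h2.trans h1) hKpos.le
        _ = K * Sg * C := by ring
    have h5 : β * (g (u (s+1)) - g zhat) ≤ K * Sg := le_of_mul_le_mul_right h4 hCpos
    linarith [h5, hdesc]
  -- iterate the contraction
  have hiter : ∀ n, n ≤ S → (g (u n) - g zhat) * (1 + β)^n ≤ g (u 0) - g zhat := by
    intro n
    induction n with
    | zero => intro _; simp
    | succ k ih =>
        intro hk
        have hkS : k < S := Nat.lt_of_succ_le hk
        have h1 := hstep k hkS
        have h2 : (g (u (k+1)) - g zhat) * (1+β)^(k+1)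
            ≤ (g (u k) - g zhat) * (1+β)^k := by
          rw [pow_succ]
          calc (g (u (k+1)) - g zhat) * ((1+β)^k * (1+β))
              = ((g (u (k+1)) - g zhat) * (1+β)) * (1+β)^k := by ring
            _ ≤ (g (u k) - g zhat) * (1+β)^k :=
              mul_le_mul_of_nonneg_right h1 (by positivity)
        exact h2.trans (ih hkS.le)
  -- conclude
  have h1β : (0:ℝ) < 1 + β := by linarith
  have hfinal : g (u S) - g zhat ≤ (g (u 0) - g zhat) * ((1+β)^S)⁻¹ := by
    have hp : (0:ℝ) < (1+β)^S := by positivity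
    calc g (u S) - g zhat
        = (g (u S) - g zhat) * (1+β)^S * ((1+β)^S)⁻¹ := by field_simp
      _ ≤ (g (u 0) - g zhat) * ((1+β)^S)⁻¹ :=
          mul_le_mul_of_nonneg_right (hiter S le_rfl) (by positivity)
  have hexp : ((1+β)^S)⁻¹ ≤ Real.exp (-(β * S) / (β + 1)) := by
    have h1 : (1+β)⁻¹ ≤ Real.exp (-(β/(1+β))) := by
      have h2 := Real.add_one_le_exp (-(β/(1+β)))
      have h3 : -(β/(1+β)) + 1 = (1+β)⁻¹ := by field_simp; ring
      linarith
    have h4 : ((1+β)^S)⁻¹ = ((1+β)⁻¹)^S := by rw [inv_pow]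
    have h5 : ((1+β)⁻¹)^S ≤ (Real.exp (-(β/(1+β))))^S :=
      pow_le_pow_left₀ (by positivity) h1 S
    have h6 : (Real.exp (-(β/(1+β))))^S = Real.exp (-(β * S) / (β + 1)) := by
      rw [← Real.exp_nat_mul]
      congr 1
      have hne : β + 1 ≠ 0 := by linarith
      field_simp
      ring
    rw [h4, ← h6]
    exact h5
  calc g (u S) - g zhat ≤ (g (u 0) - g zhat) * ((1+β)^S)⁻¹ := hfinal
    _ ≤ (g (u 0) - g zhat) * Real.exp (-(β * S) / (β + 1)) :=
        mul_le_mul_of_nonneg_left hexp (hDnn 0)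
    _ = Real.exp (-(β * S) / (β + 1)) * (g (u 0) - g zhat) := by ring
end

section
/- Let E be a real inner product space, let z* ∈ E, and let (u_s)_{s≥0} be a sequence in E with D := ‖u_0 − z*‖ > 0. Suppose the restart recursion ‖u_{s+1} − z*‖² ≤ ‖u_s − z*‖³ / (2D) holds for every s ≥ 0. Then the iterates converge superlinearly: for every integer s ≥ 1, ‖u_s − z*‖² ≤ (1/2)^{(3/2)^{s−1}} · D². -/
/-- Superlinear convergence of the restart scheme: if
`‖u_{s+1} − z*‖² ≤ ‖u_s − z*‖³ / (2D)` with `D = ‖u_0 − z*‖ > 0`, then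
`‖u_s − z*‖² ≤ (1/2)^{(3/2)^{s−1}} D²` for all `s ≥ 1`. -/
theorem restart_superlinear_convergence
    {E : Type*} [NormedAddCommGroup E] [InnerProductSpace ℝ E]
    (zstar : E) (u : ℕ → E) (D : ℝ)
    (hD : D = ‖u 0 - zstar‖) (hDpos : 0 < D)
    (hrec : ∀ s : ℕ, ‖u (s + 1) - zstar‖ ^ 2 ≤ ‖u s - zstar‖ ^ 3 / (2 * D)) :
    ∀ s : ℕ, 1 ≤ s →
      ‖u s - zstar‖ ^ 2 ≤ ((1 : ℝ) / 2) ^ (((3 : ℝ) / 2) ^ (s - 1 : ℕ)) * D ^ 2 := by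
  intro s hs
  induction s, hs using Nat.le_induction with
  | base =>
    have h := hrec 0
    rw [← hD] at h
    simp only [Nat.sub_self, pow_zero, Real.rpow_one]
    calc ‖u 1 - zstar‖ ^ 2 ≤ D ^ 3 / (2 * D) := h
      _ = 1 / 2 * D ^ 2 := by field_simp
  | succ n hn ih =>
    set x : ℝ := ‖u n - zstar‖ with hxdef
    have hx : (0:ℝ) ≤ x := norm_nonneg _
    set a : ℝ := ((3:ℝ)/2) ^ (n - 1) with hadef
    have ha : (0:ℝ) ≤ a := by positivity
    have hhalf : (0:ℝ) ≤ (1:ℝ)/2 * a := by positivity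
    -- x^3 = (x^2)^(3/2) in rpow
    have hx3 : x ^ 3 = (x ^ 2 : ℝ) ^ ((3:ℝ)/2) := by
      rw [← Real.rpow_natCast x 2, ← Real.rpow_natCast x 3,
        ← Real.rpow_mul hx]
      norm_num
    have hmono : (x ^ 2 : ℝ) ^ ((3:ℝ)/2) ≤
        (((1:ℝ)/2) ^ a * D ^ 2) ^ ((3:ℝ)/2) :=
      Real.rpow_le_rpow (by positivity) ih (by norm_num)
    have hrhs : (((1:ℝ)/2) ^ a * D ^ 2) ^ ((3:ℝ)/2)
        = ((1:ℝ)/2) ^ (a * ((3:ℝ)/2)) * D ^ 3 := by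
      rw [Real.mul_rpow (by positivity) (by positivity),
        ← Real.rpow_natCast D 2, ← Real.rpow_natCast D 3,
        ← Real.rpow_mul hDpos.le, ← Real.rpow_mul (by norm_num : (0:ℝ) ≤ 1/2)]
      norm_num
    have h := hrec n
    have step : ‖u (n+1) - zstar‖ ^ 2 ≤
        ((1:ℝ)/2) ^ (a * ((3:ℝ)/2)) * D ^ 3 / (2 * D) := by
      refine h.trans ?_
      apply div_le_div_of_nonneg_right _ (by positivity)
      rw [hx3, ← hrhs]; exact hmono
    have heq : ((1:ℝ)/2) ^ (a * ((3:ℝ)/2)) * D ^ 3 / (2 * D)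
        = ((1:ℝ)/2) ^ (a * ((3:ℝ)/2) + 1) * D ^ 2 := by
      rw [Real.rpow_add (by norm_num), Real.rpow_one]
      field_simp
    have hle : ((1:ℝ)/2) ^ (a * ((3:ℝ)/2) + 1) * D ^ 2
        ≤ ((1:ℝ)/2) ^ (a * ((3:ℝ)/2)) * D ^ 2 := by
      apply mul_le_mul_of_nonneg_right _ (by positivity)
      apply Real.rpow_le_rpow_of_exponent_ge (by norm_num) (by norm_num)
      linarith
    have hexp : ((3:ℝ)/2) ^ (n + 1 - 1 : ℕ) = a * ((3:ℝ)/2) := by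
      have : n + 1 - 1 = (n - 1) + 1 := by omega
      rw [this, pow_succ, hadef]
    rw [hexp]
    calc ‖u (n+1) - zstar‖ ^ 2 ≤ _ := step
      _ = _ := heq
      _ ≤ _ := hle
end

section
/- Let E be a finite-dimensional real inner product space, let H : E → E be a continuous linear map satisfying ⟨H v, v⟩ ≥ 0 for all v ∈ E, and let b ∈ E with b ≠ 0. Then: (i) for every λ > 0 the map H + λ·Id is bijective; and (ii) the function λ ↦ ‖(H + λ·Id)^{−1} b‖ / λ is strictly decreasing on (0, ∞). -/
open scoped RealInnerProductSpace

/-- For a positive-semidefinite continuous linear map `H` and `b ≠ 0`: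
(i) `H + λ·Id` is bijective for each `λ > 0`, and (ii) the function
`λ ↦ ‖(H + λ·Id)⁻¹ b‖ / λ` is strictly decreasing on `(0, ∞)`. -/
theorem resolvent_norm_strictly_decreasing
    {E : Type*} [NormedAddCommGroup E] [InnerProductSpace ℝ E] [FiniteDimensional ℝ E]
    (H : E →L[ℝ] E) (hH : ∀ v : E, 0 ≤ ⟪H v, v⟫)
    (b : E) (hb : b ≠ 0) :
    (∀ l : ℝ, 0 < l → Function.Bijective (fun v : E => H v + l • v)) ∧
      (∀ l₁ l₂ : ℝ, 0 < l₁ → l₁ < l₂ →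
        ∀ v₁ v₂ : E, H v₁ + l₁ • v₁ = b → H v₂ + l₂ • v₂ = b →
          ‖v₂‖ / l₂ < ‖v₁‖ / l₁) := by
  -- key: for l > 0, if H w + l w = 0 then w = 0
  have key : ∀ (l : ℝ), 0 < l → ∀ w : E, H w + l • w = 0 → w = 0 := by
    intro l hl w hw
    have h0 : (0 : ℝ) = ⟪H w, w⟫ + l * ⟪w, w⟫ := by
      have := congrArg (fun x => ⟪x, w⟫) hw
      simpa [inner_add_left, real_inner_smul_left] using this.symm
    have h1 : l * ⟪w, w⟫ ≤ 0 := by nlinarith [hH w]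
    have h2 : ⟪w, w⟫ ≤ 0 := by nlinarith
    have := real_inner_self_nonneg (x := w)
    have : ⟪w, w⟫ = 0 := le_antisymm h2 this
    exact inner_self_eq_zero.mp (by exact_mod_cast this)
  constructor
  · intro l hl
    set T : E →ₗ[ℝ] E := (H : E →ₗ[ℝ] E) + l • LinearMap.id with hT
    have hfun : (fun v : E => H v + l • v) = T := rfl
    have hinj : Function.Injective T := by
      rw [← LinearMap.ker_eq_bot]
      rw [LinearMap.ker_eq_bot']
      intro w hw
      exact key l hl w (by simpa [hT] using hw)
    rw [hfun]
    exact ⟨hinj, (LinearMap.injective_iff_surjective).mp hinj⟩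
  · intro l₁ l₂ hl₁ hl₁₂ v₁ v₂ h₁ h₂
    have hv₁ : v₁ ≠ 0 := by
      rintro rfl
      simp at h₁
      exact hb h₁.symm
    set w : E := v₁ - v₂ with hwdef
    have heq : H w + l₁ • w = (l₂ - l₁) • v₂ := by
      have e1 : H v₁ = b - l₁ • v₁ := by rw [← h₁]; abel
      have e2 : H v₂ = b - l₂ • v₂ := by rw [← h₂]; abel
      have hmap : H w = H v₁ - H v₂ := by simp [hwdef]
      rw [hmap, hwdef, e1, e2]
      module
    -- inner with w
    have hpos : 0 ≤ (l₂ - l₁) * ⟪v₂, w⟫ := by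
      have := congrArg (fun x => ⟪x, w⟫) heq
      simp only [inner_add_left, real_inner_smul_left] at this
      nlinarith [hH w, real_inner_self_nonneg (x := w), hl₁]
    have hiw : 0 ≤ ⟪v₂, w⟫ := nonneg_of_mul_nonneg_right hpos (by linarith)
    have hle : ‖v₂‖ ≤ ‖v₁‖ := by
      have h1 : ⟪v₂, v₂⟫ ≤ ⟪v₂, v₁⟫ := by
        have : ⟪v₂, w⟫ = ⟪v₂, v₁⟫ - ⟪v₂, v₂⟫ := by
          rw [hwdef, inner_sub_right]
        linarith [hiw, this ▸ hiw]
      have h2 : ⟪v₂, v₁⟫ ≤ ‖v₂‖ * ‖v₁‖ := real_inner_le_norm v₂ v₁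
      have h3 : ‖v₂‖ ^ 2 ≤ ‖v₂‖ * ‖v₁‖ := by
        rw [← real_inner_self_eq_norm_sq]; linarith
      nlinarith [norm_nonneg v₂, norm_nonneg v₁]
    have hv₁pos : 0 < ‖v₁‖ := norm_pos_iff.mpr hv₁
    calc ‖v₂‖ / l₂ ≤ ‖v₁‖ / l₂ := by gcongr; linarith
      _ < ‖v₁‖ / l₁ := div_lt_div_of_pos_left hv₁pos hl₁ hl₁₂
end
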